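/- arXiv:2211.10498 — 2 statements merged into one kernel-verified Lean document; each statement's English description precedes it below -/
import Mathlib

section
/- For μ<0 and ν>0 with suitable magnitudes (specifically those arising as μ=−H'(1/2+σ)/(2σ), ν=H'(1/2+σ)/σ for σ∈(0,1/2)), the equation H'(u)=μ+νu has exactly three solutions in (0,1), located at u=1/2−σ, u=1/2, and u=1/2+σ. -/
/-!
`H` is Mathlib's binary entropy, so `H'(u) = log (1 - u) - log u`. Since `μ = -ν/2`, the equation
`H'(u) = μ + ν u` says that `g(u) := H'(u) - ν (u - 1/2)` vanishes. This `g` is odd about `1/2`,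
and `g'(u) = -1 / (u (1 - u)) - ν` is strictly decreasing on `(1/2, 1)`, so `g` is strictly concave
on `[1/2, 1)`. There it vanishes at `1/2` by symmetry and at `1/2 + σ` by the choice of `ν`, hence
nowhere else; oddness transfers this to `(0, 1/2)`.
-/

noncomputable def H (u : ℝ) : ℝ := -(u * Real.log u + (1 - u) * Real.log (1 - u))

open Real Set

lemma H_eq_binEntropy : H = binEntropy := by
  funext u
  simp only [H, binEntropy, log_inv]
  ring

theorem StrictConcaveOn.eq_of_lt_of_lt_of_apply_eq {s : Set ℝ} {f : ℝ → ℝ}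
    (hf : StrictConcaveOn ℝ s f) {a b c : ℝ} (ha : a ∈ s) (hb : b ∈ s) (hc : c ∈ s)
    (hab : a < b) (hac : a < c) (hfb : f b = f a) (hfc : f c = f a) : b = c := by
  have key : ∀ {y z}, z ∈ s → a < y → y < z → f z = f a → f a < f y := by
    intro y z hz hay hyz hfz
    have := hf.lt_on_openSegment ha hz (hay.trans hyz).ne
      (by rw [openSegment_eq_Ioo (hay.trans hyz)]; exact ⟨hay, hyz⟩)
    rwa [hfz, min_self] at this
  rcases lt_trichotomy b c with hbc | rfl | hcb
  · exact absurd hfb (key hc hab hbc hfc).ne'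
  · rfl
  · exact absurd hfc (key hb hac hcb hfb).ne'

namespace Real

/-- The equation `H'(u) = μ + ν u` with `μ = -ν/2` reads `derivBinEntropySubLine ν u = 0`. -/
noncomputable def derivBinEntropySubLine (ν u : ℝ) : ℝ := deriv binEntropy u - ν * (u - 1/2)

variable {ν : ℝ}

lemma derivBinEntropySubLine_one_sub (u : ℝ) :
    derivBinEntropySubLine ν (1 - u) = -derivBinEntropySubLine ν u := by
  simp only [derivBinEntropySubLine, deriv_binEntropy, sub_sub_cancel]
  ring

lemma derivBinEntropySubLine_half : derivBinEntropySubLine ν (1/2) = 0 := by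
  norm_num [derivBinEntropySubLine, deriv_binEntropy]

lemma hasDerivAt_derivBinEntropySubLine {u : ℝ} (hu₀ : u ≠ 0) (hu₁ : u ≠ 1) :
    HasDerivAt (derivBinEntropySubLine ν) (-1 / (u * (1 - u)) - ν) u := by
  have hd : DifferentiableAt ℝ (deriv binEntropy) u := by
    rw [show deriv binEntropy = fun p => log (1 - p) - log p from funext deriv_binEntropy]
    have : 1 - u ≠ 0 := sub_ne_zero.2 hu₁.symm
    fun_prop (disch := assumption)
  have h2 : deriv (deriv binEntropy) u = -1 / (u * (1 - u)) := deriv2_binEntropy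
  have h := hd.hasDerivAt.sub (((hasDerivAt_id u).sub_const (1/2)).const_mul ν)
  rwa [h2, mul_one] at h

lemma strictConcaveOn_derivBinEntropySubLine :
    StrictConcaveOn ℝ (Ico (1/2) 1) (derivBinEntropySubLine ν) := by
  have hderiv : ∀ u ∈ Ico (1/2 : ℝ) 1,
      HasDerivAt (derivBinEntropySubLine ν) (-1 / (u * (1 - u)) - ν) u := fun u hu =>
    hasDerivAt_derivBinEntropySubLine (by linarith [hu.1]) hu.2.ne
  refine StrictAntiOn.strictConcaveOn_of_deriv (convex_Ico _ _)
    (fun u hu => (hderiv u hu).continuousAt.continuousWithinAt) ?_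
  rw [interior_Ico]
  intro a ha b hb hab
  rw [(hderiv a (Ioo_subset_Ico_self ha)).deriv, (hderiv b (Ioo_subset_Ico_self hb)).deriv]
  have hb_pos : 0 < b * (1 - b) := mul_pos (by linarith [hb.1]) (by linarith [hb.2])
  have hba : b * (1 - b) < a * (1 - a) := by nlinarith [ha.1]
  have := one_div_lt_one_div_of_lt hb_pos hba
  rw [neg_div, neg_div]
  linarith

theorem setOf_derivBinEntropySubLine_eq_zero {σ : ℝ} (hσ : 0 < σ) (hσ' : σ < 1/2)
    (hroot : derivBinEntropySubLine ν (1/2 + σ) = 0) :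
    {u ∈ Ioo (0 : ℝ) 1 | derivBinEntropySubLine ν u = 0} = {1/2 - σ, 1/2, 1/2 + σ} := by
  have hright : ∀ u, 1/2 < u → u < 1 → derivBinEntropySubLine ν u = 0 → u = 1/2 + σ :=
    fun u hu₀ hu₁ hu => strictConcaveOn_derivBinEntropySubLine.eq_of_lt_of_lt_of_apply_eq
      (a := 1/2) (by norm_num) ⟨hu₀.le, hu₁⟩ ⟨by linarith, by linarith⟩ hu₀ (by linarith)
      (by rw [hu, derivBinEntropySubLine_half]) (by rw [hroot, derivBinEntropySubLine_half])
  have hleft : derivBinEntropySubLine ν (1/2 - σ) = 0 := by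
    rw [show 1/2 - σ = 1 - (1/2 + σ) by ring, derivBinEntropySubLine_one_sub, hroot, neg_zero]
  ext u
  simp only [mem_ofPred_eq, mem_insert_iff, mem_singleton_iff]
  constructor
  · rintro ⟨⟨hu₀, hu₁⟩, hu⟩
    rcases lt_trichotomy u (1/2) with h | rfl | h
    · have := hright (1 - u) (by linarith) (by linarith)
        (by rw [derivBinEntropySubLine_one_sub, hu, neg_zero])
      left; linarith
    · right; left; rfl
    · right; right; exact hright u h hu₁ hu
  · rintro (rfl | rfl | rfl)
    · exact ⟨⟨by linarith, by linarith⟩, hleft⟩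
    · exact ⟨⟨by norm_num, by norm_num⟩, derivBinEntropySubLine_half⟩
    · exact ⟨⟨by linarith, by linarith⟩, hroot⟩

end Real

theorem stmt12 (σ : ℝ) (hσ : 0 < σ) (hσ' : σ < 1/2) :
    {u : ℝ | u ∈ Set.Ioo (0:ℝ) 1 ∧
        deriv H u = -(deriv H (1/2 + σ)) / (2 * σ) + (deriv H (1/2 + σ) / σ) * u}
      = {1/2 - σ, 1/2, 1/2 + σ} := by
  rw [H_eq_binEntropy]
  set c := deriv binEntropy (1/2 + σ)
  have hline : ∀ u, -c / (2 * σ) + c / σ * u = c / σ * (u - 1/2) := fun u => by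
    field_simp; ring
  have hroot : derivBinEntropySubLine (c / σ) (1/2 + σ) = 0 := by
    rw [derivBinEntropySubLine, add_sub_cancel_left, div_mul_cancel₀ _ hσ.ne', sub_self]
  rw [← setOf_derivBinEntropySubLine_eq_zero hσ hσ' hroot]
  ext u
  simp only [mem_ofPred_eq, derivBinEntropySubLine, hline, sub_eq_zero]
end

section
/- For the tripodal graphon of the previous construction with c=σ(A³−B³)^{−1/3}, the entropy satisfies S(g) = H(e) + (c²/2)[H(e−A+B)+H(e+A+B)−2H(e)−2B H'(e)] + O(c³) as c→0, with A,B fixed. -/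
/-!
The graphon is constant on blocks, so its entropy is exactly
`c²/2 H(e-A+(1-c)B) + c²/2 H(e+A+(1-c)B) + 2c(1-c) H(e-cB) + (1-c)² H(e+c²B/(1-c))`.
On the two small blocks a first-order bound `H(p - cB) = H p + O(c)` suffices, while the two
large blocks need the second-order Taylor bound of `H` at `e`: the linear terms `-2c²(1-c)B H'(e)`
and `(1-c)c²B H'(e)` add up to `-c²B H'(e) + O(c³)`.
-/

open MeasureTheory Asymptotics

open Filter Topology Set

noncomputable def threeStep {α : Type*} (a b : ℝ) (p q r : α) (t : ℝ) : α :=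
  if t ≤ a then p else if t ≤ b then q else r

theorem setIntegral_const_of_eqOn {f : ℝ → ℝ} {s : Set ℝ} {k : ℝ} (hs : MeasurableSet s)
    (hfs : EqOn f (fun _ => k) s) : ∫ t in s, f t = volume.real s * k := by
  rw [setIntegral_congr_fun hs hfs, setIntegral_const, smul_eq_mul]

theorem setIntegral_Icc_threeStep {u a b v p q r : ℝ} (hua : u ≤ a) (hab : a ≤ b)
    (hbv : b ≤ v) :
    ∫ t in Icc u v, threeStep a b p q r t = (a - u) * p + (b - a) * q + (v - b) * r := by
  set f := threeStep a b p q r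
  have h₁ : EqOn f (fun _ => p) (Icc u a) := fun t ht => if_pos ht.2
  have h₂ : EqOn f (fun _ => q) (Ioc a b) := fun t ht => by
    simp only [f, threeStep, if_neg (not_le.2 ht.1), if_pos ht.2]
  have h₃ : EqOn f (fun _ => r) (Ioc b v) := fun t ht => by
    simp only [f, threeStep, if_neg (not_le.2 (hab.trans_lt ht.1)), if_neg (not_le.2 ht.1)]
  have i₁ : IntegrableOn f (Icc u a) :=
    (integrableOn_const measure_Icc_lt_top.ne).congr_fun h₁.symm measurableSet_Icc
  have i₂ : IntegrableOn f (Ioc a b) :=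
    (integrableOn_const measure_Ioc_lt_top.ne).congr_fun h₂.symm measurableSet_Ioc
  have i₃ : IntegrableOn f (Ioc b v) :=
    (integrableOn_const measure_Ioc_lt_top.ne).congr_fun h₃.symm measurableSet_Ioc
  rw [← Icc_union_Ioc_eq_Icc hua (hab.trans hbv), ← Ioc_union_Ioc_eq_Ioc hab hbv,
    setIntegral_union
      (disjoint_union_right.2 ⟨(Iic_disjoint_Ioc le_rfl).mono_left Icc_subset_Iic_self,
        (Iic_disjoint_Ioc hab).mono_left Icc_subset_Iic_self⟩)
      (measurableSet_Ioc.union measurableSet_Ioc) i₁ (i₂.union i₃),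
    setIntegral_union (Ioc_disjoint_Ioc_of_le le_rfl) measurableSet_Ioc i₂ i₃,
    setIntegral_const_of_eqOn measurableSet_Icc h₁, setIntegral_const_of_eqOn measurableSet_Ioc h₂,
    setIntegral_const_of_eqOn measurableSet_Ioc h₃, Real.volume_real_Icc_of_le hua,
    Real.volume_real_Ioc_of_le hab, Real.volume_real_Ioc_of_le hbv]
  ring

theorem integral_threeStep_apply {β : Type*} [MeasurableSpace β] (μ : Measure β) (a b : ℝ)
    (f g h : β → ℝ) (x : ℝ) :
    ∫ y, threeStep a b f g h x y ∂μ =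
      threeStep a b (∫ y, f y ∂μ) (∫ y, g y ∂μ) (∫ y, h y ∂μ) x := by
  unfold threeStep; split_ifs <;> rfl

noncomputable def tripodalGraphon (c a₁ a₂ a₃ a₄ x y : ℝ) : ℝ :=
  if x ≤ c ∧ y ≤ c then
    (if (x ≤ c/2 ∧ y ≤ c/2) ∨ (c/2 < x ∧ c/2 < y) then a₁ else a₂)
  else if x ≤ c ∨ y ≤ c then a₃
  else a₄

theorem comp_tripodalGraphon (F : ℝ → ℝ) (c a₁ a₂ a₃ a₄ x y : ℝ) :
    F (tripodalGraphon c a₁ a₂ a₃ a₄ x y) =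
      tripodalGraphon c (F a₁) (F a₂) (F a₃) (F a₄) x y := by
  unfold tripodalGraphon; split_ifs <;> rfl

theorem tripodalGraphon_eq_threeStep {c : ℝ} (hc : 0 ≤ c) (a₁ a₂ a₃ a₄ x : ℝ) :
    tripodalGraphon c a₁ a₂ a₃ a₄ x = threeStep (c/2) c (threeStep (c/2) c a₁ a₂ a₃)
      (threeStep (c/2) c a₂ a₁ a₃) (threeStep (c/2) c a₃ a₃ a₄) x := by
  funext y
  unfold tripodalGraphon threeStep
  split_ifs <;> grind

theorem integral_tripodalGraphon {c : ℝ} (hc₀ : 0 ≤ c) (hc₁ : c ≤ 1) (a₁ a₂ a₃ a₄ : ℝ) :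
    ∫ x in Icc 0 1, ∫ y in Icc 0 1, tripodalGraphon c a₁ a₂ a₃ a₄ x y =
      c ^ 2 / 2 * a₁ + c ^ 2 / 2 * a₂ + 2 * c * (1 - c) * a₃ + (1 - c) ^ 2 * a₄ := by
  have h₀ : (0 : ℝ) ≤ c / 2 := by linarith
  have h₁ : c / 2 ≤ c := by linarith
  simp only [tripodalGraphon_eq_threeStep hc₀, integral_threeStep_apply,
    setIntegral_Icc_threeStep h₀ h₁ hc₁]
  ring

theorem ContDiffAt.isBigO_sub_sub_deriv_mul {f : ℝ → ℝ} {x₀ : ℝ} (hf : ContDiffAt ℝ 2 f x₀) :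
    (fun x => f x - f x₀ - deriv f x₀ * (x - x₀)) =O[𝓝 x₀] fun x => (x - x₀) ^ 2 := by
  obtain ⟨u, hu, hx₀u, hfu⟩ := hf.contDiffOn' le_rfl (by simp)
  obtain ⟨ε, hε, hball⟩ := Metric.isOpen_iff.1 hu x₀ hx₀u
  have hnhds : Metric.ball x₀ ε ∈ 𝓝 x₀ := Metric.ball_mem_nhds x₀ hε
  have htaylor := taylor_isLittleO (convex_ball x₀ ε) (Metric.mem_ball_self hε)
    ((hfu.mono (by simpa using hball)).of_le le_rfl)
  rw [nhdsWithin_eq_nhds.2 hnhds] at htaylor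
  have hquad : (fun x => iteratedDerivWithin 2 f (Metric.ball x₀ ε) x₀ / 2 * (x - x₀) ^ 2)
      =O[𝓝 x₀] fun x => (x - x₀) ^ 2 := (isBigO_refl _ _).const_mul_left _
  refine (htaylor.isBigO.add hquad).congr_left fun x => ?_
  simp only [taylor_within_apply, Finset.sum_range_succ, Finset.sum_range_zero, smul_eq_mul,
    iteratedDerivWithin_zero, iteratedDerivWithin_one, derivWithin_of_mem_nhds hnhds,
    Nat.factorial_zero, Nat.factorial_one, Nat.factorial_two]
  push_cast
  ring

section Perturbation

variable {α : Type*} {l : Filter α} {φ ψ : α → ℝ} {f : ℝ → ℝ} {x₀ : ℝ}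

theorem DifferentiableAt.isBigO_comp_add_sub (hf : DifferentiableAt ℝ f x₀)
    (hφ : φ =O[l] ψ) (hφ₀ : Tendsto φ l (𝓝 0)) :
    (fun t => f (x₀ + φ t) - f x₀) =O[l] ψ := by
  have hx₀ : Tendsto (fun t => x₀ + φ t) l (𝓝 x₀) := by simpa using hφ₀.const_add x₀
  have h := hf.isBigO_sub.comp_tendsto hx₀
  simp only [Function.comp_def, add_sub_cancel_left] at h
  exact h.trans hφ

theorem ContDiffAt.isBigO_comp_add_sub_sub_deriv_mul (hf : ContDiffAt ℝ 2 f x₀)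
    (hφ : φ =O[l] ψ) (hφ₀ : Tendsto φ l (𝓝 0)) :
    (fun t => f (x₀ + φ t) - f x₀ - deriv f x₀ * φ t) =O[l] fun t => ψ t ^ 2 := by
  have hx₀ : Tendsto (fun t => x₀ + φ t) l (𝓝 x₀) := by simpa using hφ₀.const_add x₀
  have h := hf.isBigO_sub_sub_deriv_mul.comp_tendsto hx₀
  simp only [Function.comp_def, add_sub_cancel_left] at h
  exact h.trans (hφ.pow 2)

end Perturbation

theorem isBigO_tripodal_entropy_sub_expansion {F : ℝ → ℝ} {e p₁ p₂ B : ℝ}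
    (hFe : ContDiffAt ℝ 2 F e) (hF₁ : DifferentiableAt ℝ F p₁) (hF₂ : DifferentiableAt ℝ F p₂) :
    (fun c : ℝ => c ^ 2 / 2 * F (p₁ - c * B) + c ^ 2 / 2 * F (p₂ - c * B)
        + 2 * c * (1 - c) * F (e - c * B) + (1 - c) ^ 2 * F (e + c ^ 2 * B / (1 - c))
        - (F e + c ^ 2 / 2 * (F p₁ + F p₂ - 2 * F e - 2 * B * deriv F e)))
      =O[𝓝 0] fun c => c ^ 3 := by
  have hlin : (fun c : ℝ => -(c * B)) =O[𝓝 0] fun c => c :=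
    (isBigO_refl (fun c : ℝ => c) _).const_mul_left (-B) |>.congr_left fun c => by ring
  have hlin₀ : Tendsto (fun c : ℝ => -(c * B)) (𝓝 0) (𝓝 0) := hlin.trans_tendsto tendsto_id
  have hquad : (fun c : ℝ => c ^ 2 * B / (1 - c)) =O[𝓝 0] fun c => c ^ 2 := by
    have hbdd : (fun c : ℝ => B / (1 - c)) =O[𝓝 0] fun _ => (1 : ℝ) :=
      (by fun_prop (disch := norm_num) : ContinuousAt (fun c : ℝ => B / (1 - c)) 0).tendsto
        |>.isBigO_one ℝ
    exact ((isBigO_refl (· ^ 2) _).mul hbdd).congr (fun c => by ring) (fun c => by ring)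
  have hquad₀ : Tendsto (fun c : ℝ => c ^ 2 * B / (1 - c)) (𝓝 0) (𝓝 0) :=
    hquad.trans_tendsto (by simpa using (continuous_pow 2).tendsto (0 : ℝ))
  have hone : ∀ k : ℝ → ℝ, Continuous k → k =O[𝓝 (0 : ℝ)] fun _ => (1 : ℝ) :=
    fun k hk => (hk.tendsto 0).isBigO_one ℝ
  have hT₁ : (fun c : ℝ => 1 / 2 * ((F (p₁ + -(c * B)) - F p₁) * c ^ 2)) =O[𝓝 0] (· ^ 3) :=
    (((hF₁.isBigO_comp_add_sub hlin hlin₀).mul (isBigO_refl (· ^ 2) _)).const_mul_left _)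
      |>.congr_right fun c => by ring
  have hT₂ : (fun c : ℝ => 1 / 2 * ((F (p₂ + -(c * B)) - F p₂) * c ^ 2)) =O[𝓝 0] (· ^ 3) :=
    (((hF₂.isBigO_comp_add_sub hlin hlin₀).mul (isBigO_refl (· ^ 2) _)).const_mul_left _)
      |>.congr_right fun c => by ring
  have hT₃ := ((hone (fun c => 2 * (1 - c)) (by fun_prop)).mul
    ((isBigO_refl (fun c : ℝ => c) _).mul (hFe.isBigO_comp_add_sub_sub_deriv_mul hlin hlin₀)))
      |>.congr_right fun c => show 1 * (c * c ^ 2) = c ^ 3 by ring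
  have hT₄ := ((hone (fun c => (1 - c) ^ 2) (by fun_prop)).mul
    ((hFe.isBigO_comp_add_sub_sub_deriv_mul hquad hquad₀).trans
      ((isLittleO_pow_pow (by norm_num : 3 < 4)).isBigO.congr_left fun c => by ring)))
      |>.congr_right fun c => show 1 * c ^ 3 = c ^ 3 by ring
  have hT₅ := (isBigO_refl (fun c : ℝ => c ^ 3) (𝓝 0)).const_mul_left (B * deriv F e)
  refine ((((hT₁.add hT₂).add hT₃).add hT₄).add hT₅).congr' ?_ EventuallyEq.rfl
  filter_upwards [eventually_ne_nhds (one_ne_zero.symm : (0 : ℝ) ≠ 1)] with c hc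
  have hu : (1 - c) ^ 2 * (c ^ 2 * B / (1 - c)) = (1 - c) * c ^ 2 * B := by
    field_simp [sub_ne_zero.2 hc.symm]
  simp only [← sub_eq_add_neg]
  linear_combination (-deriv F e) * hu

theorem contDiffAt_H {n : WithTop ℕ∞} {u : ℝ} (h₀ : u ≠ 0) (h₁ : u ≠ 1) : ContDiffAt ℝ n H u := by
  have : ContDiffAt ℝ n Real.log u := Real.contDiffAt_log.2 h₀
  have : ContDiffAt ℝ n Real.log (1 - u) := Real.contDiffAt_log.2 (sub_ne_zero.2 h₁.symm)
  unfold H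
  fun_prop

theorem stmt18 (e A B : ℝ) (he : 0 < e) (he1 : e < 1)
    (hB : 0 < B) (hAB : B < A) (hlow : 0 < e - A + B) (hhigh : e + A + B < 1)
    (g : ℝ → ℝ → ℝ → ℝ)
    (hg : ∀ c x y : ℝ, g c x y =
      if x ≤ c ∧ y ≤ c then
        (if (x ≤ c/2 ∧ y ≤ c/2) ∨ (c/2 < x ∧ c/2 < y) then e - A + (1 - c) * B
         else e + A + (1 - c) * B)
      else if x ≤ c ∨ y ≤ c then e - c * B
      else e + c ^ 2 * B / (1 - c)) :
    (fun c : ℝ =>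
        (∫ x in Set.Icc (0:ℝ) 1, ∫ y in Set.Icc (0:ℝ) 1, H (g c x y))
          - (H e + c ^ 2 / 2 *
              (H (e - A + B) + H (e + A + B) - 2 * H e - 2 * B * deriv H e)))
      =O[nhdsWithin 0 (Set.Ioi 0)] fun c : ℝ => c ^ 3 := by
  have hg' : ∀ c x y, g c x y = tripodalGraphon c (e - A + B - c * B) (e + A + B - c * B)
      (e - c * B) (e + c ^ 2 * B / (1 - c)) x y := fun c x y => by
    rw [hg, tripodalGraphon]; ring_nf
  have hS : ∀ c ∈ Ioo (0 : ℝ) 1, ∫ x in Icc 0 1, ∫ y in Icc 0 1, H (g c x y) =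
      c ^ 2 / 2 * H (e - A + B - c * B) + c ^ 2 / 2 * H (e + A + B - c * B)
        + 2 * c * (1 - c) * H (e - c * B) + (1 - c) ^ 2 * H (e + c ^ 2 * B / (1 - c)) :=
    fun c hc => by simp only [hg', comp_tripodalGraphon, integral_tripodalGraphon hc.1.le hc.2.le]
  refine ((isBigO_tripodal_entropy_sub_expansion (B := B) (contDiffAt_H he.ne' he1.ne)
    ((contDiffAt_H hlow.ne' (by linarith)).differentiableAt one_ne_zero)
    ((contDiffAt_H (by linarith) hhigh.ne).differentiableAt one_ne_zero)).mono
      nhdsWithin_le_nhds).congr' ?_ EventuallyEq.rfl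
  filter_upwards [Ioo_mem_nhdsGT one_pos] with c hc
  rw [hS c hc]
end
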